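/- arXiv:1409.3202 — 5 statements merged into one kernel-verified Lean document; each statement's English description precedes it below -/
import Mathlib

section
/- For every t > 0 and ξ ∈ ℝ^d, 2∫₀^∞ (e^{-s²/(2t)}/√(2πt)) · e^{-s|ξ|²/2} ds = e^{(t/8)|ξ|⁴} · (2/√π) ∫_{√(2t)|ξ|²/4}^∞ e^{-τ²} dτ. -/
open MeasureTheory Real Set

lemma integral_Ioi_shift (f : ℝ → ℝ) (c : ℝ) :
    ∫ x in Set.Ioi (0 : ℝ), f (x + c) = ∫ x in Set.Ioi c, f x := by
  rw [← integral_indicator measurableSet_Ioi, ← integral_indicator measurableSet_Ioi,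
    ← integral_add_right_eq_self ((Set.Ioi c).indicator f) c]
  congr 1
  ext x
  simp [Set.indicator_apply, Set.mem_Ioi]

theorem btbm_fourier_transform (d : ℕ) (t : ℝ) (ht : 0 < t) (ξ : EuclideanSpace ℝ (Fin d)) :
    2 * ∫ s in Set.Ioi (0 : ℝ),
        (Real.exp (-s ^ 2 / (2 * t)) / Real.sqrt (2 * π * t)) * Real.exp (-s * ‖ξ‖ ^ 2 / 2)
      = Real.exp (t / 8 * ‖ξ‖ ^ 4) *
        ((2 / Real.sqrt π) *
          ∫ τ in Set.Ioi (Real.sqrt (2 * t) * ‖ξ‖ ^ 2 / 4), Real.exp (-τ ^ 2)) := by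
  set a : ℝ := ‖ξ‖ ^ 2 / 2 with ha
  have h2t : (0 : ℝ) < 2 * t := by linarith
  have hst : (0 : ℝ) < Real.sqrt (2 * t) := Real.sqrt_pos.mpr h2t
  -- step 1: rewrite integrand
  have step1 : ∀ s : ℝ,
      (Real.exp (-s ^ 2 / (2 * t)) / Real.sqrt (2 * π * t)) * Real.exp (-s * ‖ξ‖ ^ 2 / 2)
        = (Real.exp (t / 8 * ‖ξ‖ ^ 4) / Real.sqrt (2 * π * t)) *
          Real.exp (-((s + a * t) ^ 2) / (2 * t)) := by
    intro s
    rw [div_mul_eq_mul_div, div_mul_eq_mul_div, ← Real.exp_add, ← Real.exp_add]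
    congr 1
    rw [ha]
    congr 1
    field_simp
    ring
  rw [MeasureTheory.setIntegral_congr_fun measurableSet_Ioi (fun s _ => step1 s),
    MeasureTheory.integral_const_mul]
  -- step 2: shift
  have step2 : ∫ s in Set.Ioi (0 : ℝ), Real.exp (-((s + a * t) ^ 2) / (2 * t))
      = ∫ u in Set.Ioi (a * t), Real.exp (-u ^ 2 / (2 * t)) :=
    integral_Ioi_shift (fun u => Real.exp (-u ^ 2 / (2 * t))) (a * t)
  rw [step2]
  -- step 3: scaling u = sqrt(2t) * τ
  have hb : (0 : ℝ) < (Real.sqrt (2 * t))⁻¹ := inv_pos.mpr hst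
  have step3 : ∫ u in Set.Ioi (a * t), Real.exp (-u ^ 2 / (2 * t))
      = Real.sqrt (2 * t) * ∫ τ in Set.Ioi ((Real.sqrt (2 * t))⁻¹ * (a * t)),
          Real.exp (-τ ^ 2) := by
    have key : ∀ u : ℝ, Real.exp (-u ^ 2 / (2 * t))
        = (fun x : ℝ => Real.exp (-x ^ 2)) ((Real.sqrt (2 * t))⁻¹ * u) := by
      intro u
      simp only
      congr 1
      rw [mul_pow, inv_pow, Real.sq_sqrt h2t.le]
      field_simp
    rw [MeasureTheory.setIntegral_congr_fun measurableSet_Ioi (fun u _ => key u),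
      integral_comp_mul_left_Ioi (fun x => Real.exp (-x ^ 2)) _ hb, inv_inv,
      smul_eq_mul]
  rw [step3]
  -- now identify constants and the lower limit
  have hlim : (Real.sqrt (2 * t))⁻¹ * (a * t) = Real.sqrt (2 * t) * ‖ξ‖ ^ 2 / 4 := by
    rw [ha]
    have h2 : Real.sqrt (2 * t) * Real.sqrt (2 * t) = 2 * t := Real.mul_self_sqrt h2t.le
    rw [eq_div_iff (by norm_num : (4:ℝ) ≠ 0), inv_mul_eq_div, div_mul_eq_mul_div,
      div_eq_iff hst.ne']
    linear_combination (-1 : ℝ) * ‖ξ‖ ^ 2 * h2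
  rw [hlim]
  have hconst : 2 * (Real.exp (t / 8 * ‖ξ‖ ^ 4) / Real.sqrt (2 * π * t) * Real.sqrt (2 * t))
      = Real.exp (t / 8 * ‖ξ‖ ^ 4) * (2 / Real.sqrt π) := by
    have h1 : Real.sqrt (2 * π * t) = Real.sqrt π * Real.sqrt (2 * t) := by
      rw [← Real.sqrt_mul pi_pos.le]
      ring_nf
    rw [h1]
    have hπ : (0:ℝ) < Real.sqrt π := Real.sqrt_pos.mpr pi_pos
    field_simp
  linear_combination (∫ τ in Set.Ioi (Real.sqrt (2 * t) * ‖ξ‖ ^ 2 / 4), Real.exp (-τ ^ 2)) * hconst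
end

section
/- In dimension d = 2, for every s > 0, (2π)^{-2} ∫_{ℝ²} e^{-(s/4)(-2+|ξ|²)²} dξ = (1 + ψ(√s))/(4√(πs)), where ψ(u) = (2/√π)∫₀^u e^{-r²} dr is the error function. Consequently 1/(4√(πs)) ≤ (2π)^{-2} ∫_{ℝ²} e^{-(s/4)(-2+|ξ|²)²} dξ ≤ 1/(2√(πs)) for all s > 0. -/
open MeasureTheory Real Set

/-- The error function `ψ(u) = (2/√π) ∫₀ᵘ e^{-r²} dr`. -/
noncomputable def errFn (u : ℝ) : ℝ :=
  (2 / Real.sqrt π) * ∫ r in (0 : ℝ)..u, Real.exp (-r ^ 2)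

open Filter in
private lemma radial_integral (s : ℝ) (hs : 0 < s) :
    ∫ x in Ioi (0:ℝ), x * Real.exp (-(s / 4) * (-2 + x ^ 2) ^ 2)
      = (Real.sqrt π / 2 + ∫ u in (0:ℝ)..Real.sqrt s, Real.exp (-u ^ 2)) / Real.sqrt s := by
  have hss : 0 < Real.sqrt s := Real.sqrt_pos.mpr hs
  set c : ℝ := Real.sqrt s / 2 with hc
  have hcpos : 0 < c := by positivity
  have hc2 : c ^ 2 = s / 4 := by
    rw [hc, div_pow, sq_sqrt hs.le]; norm_num
  have hcont : Continuous fun u : ℝ => Real.exp (-u ^ 2) := by continuity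
  have hint : IntegrableOn (fun u : ℝ => Real.exp (-u ^ 2)) (Ioi 0) := by
    have := integrable_exp_neg_mul_sq (b := 1) one_pos
    simpa using this.integrableOn
  set G : ℝ → ℝ := fun x => ∫ u in (0:ℝ)..(c * (x ^ 2 - 2)), Real.exp (-u ^ 2) with hG
  have hGderiv : ∀ x : ℝ,
      HasDerivAt G (Real.exp (-(c * (x ^ 2 - 2)) ^ 2) * (c * (2 * x))) x := by
    intro x
    have hF : HasDerivAt (fun t => ∫ u in (0:ℝ)..t, Real.exp (-u ^ 2))
        (Real.exp (-(c * (x ^ 2 - 2)) ^ 2)) (c * (x ^ 2 - 2)) :=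
      intervalIntegral.integral_hasDerivAt_right (hcont.intervalIntegrable _ _)
        hcont.stronglyMeasurable.stronglyMeasurableAtFilter hcont.continuousAt
    have hv : HasDerivAt (fun x : ℝ => c * (x ^ 2 - 2)) (c * (2 * x)) x := by
      have := ((hasDerivAt_pow 2 x).sub_const 2).const_mul c
      refine this.congr_deriv ?_; norm_num
    exact hF.comp x hv
  have hvTop : Tendsto (fun x : ℝ => c * (x ^ 2 - 2)) atTop atTop := by
    refine Tendsto.const_mul_atTop hcpos ?_
    exact tendsto_atTop_add_const_right atTop (-2 : ℝ)
      (by simpa using tendsto_pow_atTop (n := 2) two_ne_zero) |>.congr (fun x => by ring)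
  have hℓ : Tendsto (fun t : ℝ => ∫ u in (0:ℝ)..t, Real.exp (-u ^ 2)) atTop
      (nhds (∫ u in Ioi (0:ℝ), Real.exp (-u ^ 2))) :=
    intervalIntegral_tendsto_integral_Ioi 0 hint tendsto_id
  have hGtop : Tendsto G atTop (nhds (∫ u in Ioi (0:ℝ), Real.exp (-u ^ 2))) := hℓ.comp hvTop
  have key := integral_Ioi_of_hasDerivAt_of_nonneg' (a := 0)
    (fun x _ => hGderiv x)
    (fun x hx => by
      have : (0:ℝ) < x := hx
      positivity)
    hGtop
  have hval : (∫ u in Ioi (0:ℝ), Real.exp (-u ^ 2)) = Real.sqrt π / 2 := by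
    have := integral_gaussian_Ioi 1
    simpa using this
  have hG0 : G 0 = -∫ u in (0:ℝ)..Real.sqrt s, Real.exp (-u ^ 2) := by
    have h1 : c * ((0:ℝ) ^ 2 - 2) = -Real.sqrt s := by rw [hc]; ring
    have h2 : (∫ u in (-Real.sqrt s)..(0:ℝ), Real.exp (-u ^ 2))
        = ∫ u in (0:ℝ)..Real.sqrt s, Real.exp (-u ^ 2) := by
      have := intervalIntegral.integral_comp_neg (a := (0:ℝ)) (b := Real.sqrt s)
        (fun u => Real.exp (-u ^ 2))
      simpa [neg_pow, neg_neg] using this.symm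
    rw [hG]; simp only [h1]
    rw [intervalIntegral.integral_symm, h2]
  have hpt : ∀ x : ℝ, Real.exp (-(c * (x ^ 2 - 2)) ^ 2) * (c * (2 * x))
      = Real.sqrt s * (x * Real.exp (-(s / 4) * (-2 + x ^ 2) ^ 2)) := by
    intro x
    have : -(c * (x ^ 2 - 2)) ^ 2 = -(s / 4) * (-2 + x ^ 2) ^ 2 := by
      rw [mul_pow, hc2]; ring
    rw [this, hc]; ring
  rw [hval, hG0, sub_neg_eq_add] at key
  have key2 : (∫ x in Ioi (0:ℝ),
      Real.sqrt s * (x * Real.exp (-(s / 4) * (-2 + x ^ 2) ^ 2)))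
      = Real.sqrt π / 2 + ∫ u in (0:ℝ)..Real.sqrt s, Real.exp (-u ^ 2) := by
    rw [← key]
    exact setIntegral_congr_fun measurableSet_Ioi fun x _ => (hpt x).symm
  rw [integral_const_mul] at key2
  field_simp at key2 ⊢
  linarith [key2]

theorem lks_kernel_L2_two_dim (s : ℝ) (hs : 0 < s) :
    (((2 * π) ^ 2)⁻¹ *
        ∫ ξ : EuclideanSpace ℝ (Fin 2), Real.exp (-(s / 4) * (-2 + ‖ξ‖ ^ 2) ^ 2)
      = (1 + errFn (Real.sqrt s)) / (4 * Real.sqrt (π * s))) ∧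
    (1 / (4 * Real.sqrt (π * s))
        ≤ ((2 * π) ^ 2)⁻¹ *
            ∫ ξ : EuclideanSpace ℝ (Fin 2), Real.exp (-(s / 4) * (-2 + ‖ξ‖ ^ 2) ^ 2)) ∧
    (((2 * π) ^ 2)⁻¹ *
        ∫ ξ : EuclideanSpace ℝ (Fin 2), Real.exp (-(s / 4) * (-2 + ‖ξ‖ ^ 2) ^ 2)
      ≤ 1 / (2 * Real.sqrt (π * s))) := by
  have hss : 0 < Real.sqrt s := Real.sqrt_pos.mpr hs
  have hsp : 0 < Real.sqrt π := Real.sqrt_pos.mpr pi_pos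
  have hsps : 0 < Real.sqrt (π * s) := Real.sqrt_pos.mpr (by positivity)
  -- volume of unit ball in ℝ² is π
  have hball : (volume (Metric.ball (0 : EuclideanSpace ℝ (Fin 2)) 1)).toReal = π := by
    rw [EuclideanSpace.volume_ball]
    have hg2 : Real.Gamma 2 = 1 := Real.Gamma_two
    have h2 : Real.Gamma ((Fintype.card (Fin 2) : ℝ) / 2 + 1) = 1 := by
      rw [show ((Fintype.card (Fin 2) : ℝ) / 2 + 1) = 2 by norm_num]
      exact hg2
    rw [h2]
    simp [sq_sqrt pi_pos.le, ENNReal.toReal_ofReal pi_pos.le]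
  have h := integral_fun_norm_addHaar (volume : Measure (EuclideanSpace ℝ (Fin 2)))
    (fun r : ℝ => Real.exp (-(s / 4) * (-2 + r ^ 2) ^ 2))
  simp only [finrank_euclideanSpace_fin, measureReal_def, hball] at h
  have hI : (∫ ξ : EuclideanSpace ℝ (Fin 2), Real.exp (-(s / 4) * (-2 + ‖ξ‖ ^ 2) ^ 2))
      = 2 * (π * ∫ y in Ioi (0:ℝ), y * Real.exp (-(s / 4) * (-2 + y ^ 2) ^ 2)) := by
    rw [h]
    simp [smul_eq_mul, mul_assoc]
  set T : ℝ := ∫ u in (0:ℝ)..Real.sqrt s, Real.exp (-u ^ 2) with hT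
  have hrad := radial_integral s hs
  have heq : ((2 * π) ^ 2)⁻¹ *
      (∫ ξ : EuclideanSpace ℝ (Fin 2), Real.exp (-(s / 4) * (-2 + ‖ξ‖ ^ 2) ^ 2))
      = (1 + errFn (Real.sqrt s)) / (4 * Real.sqrt (π * s)) := by
    rw [hI, hrad, errFn, ← hT, Real.sqrt_mul pi_pos.le]
    field_simp
    linear_combination (4 * (Real.sqrt π + 2 * T)) *
      Real.sq_sqrt pi_pos.le
  refine ⟨heq, ?_, ?_⟩
  · rw [heq]
    have h0 : 0 ≤ errFn (Real.sqrt s) := by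
      refine mul_nonneg (by positivity) ?_
      exact intervalIntegral.integral_nonneg (Real.sqrt_nonneg s)
        (fun u _ => (Real.exp_pos _).le)
    gcongr
    linarith
  · rw [heq]
    have hTle : T ≤ Real.sqrt π / 2 := by
      have hint : IntegrableOn (fun u : ℝ => Real.exp (-u ^ 2)) (Ioi 0) := by
        have := integrable_exp_neg_mul_sq (b := 1) one_pos
        simpa using this.integrableOn
      have h1 : T = ∫ u in Ioc (0:ℝ) (Real.sqrt s), Real.exp (-u ^ 2) := by
        rw [hT, intervalIntegral.integral_of_le (Real.sqrt_nonneg s)]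
      have h2 : (∫ u in Ioc (0:ℝ) (Real.sqrt s), Real.exp (-u ^ 2))
          ≤ ∫ u in Ioi (0:ℝ), Real.exp (-u ^ 2) := by
        refine setIntegral_mono_set hint ?_ (HasSubset.Subset.eventuallyLE Ioc_subset_Ioi_self)
        filter_upwards with u using (Real.exp_pos _).le
      have h3 : (∫ u in Ioi (0:ℝ), Real.exp (-u ^ 2)) = Real.sqrt π / 2 := by
        have := integral_gaussian_Ioi 1
        simpa using this
      rw [h1]; rw [h3] at h2; exact h2
    have h1 : errFn (Real.sqrt s) ≤ 1 := by
      rw [errFn, ← hT]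
      calc 2 / Real.sqrt π * T ≤ 2 / Real.sqrt π * (Real.sqrt π / 2) := by gcongr
        _ = 1 := by field_simp
    rw [show (1:ℝ) / (2 * Real.sqrt (π * s)) = 2 / (4 * Real.sqrt (π * s)) by ring]
    gcongr
    linarith
end

section
/- For d ∈ {1,2,3}, lim_{t→0⁺} [∫_{ℝ^d} e^{-(t/4)(-2+|ξ|²)²} dξ] / [∫_{ℝ^d} e^{-(t/4)|ξ|⁴} dξ] = 1. -/
open MeasureTheory Real Set Filter

noncomputable def Naux (d : ℕ) (s : ℝ) : ℝ :=
  ∫ η : EuclideanSpace ℝ (Fin d), Real.exp (-(1/4) * (‖η‖ ^ 2 - 2 * s) ^ 2)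

lemma gauss_integrable (d : ℕ) :
    Integrable (fun η : EuclideanSpace ℝ (Fin d) => Real.exp (-(1/16 : ℝ) * ‖η‖ ^ 2)) := by
  have h := (GaussianFourier.integrable_cexp_neg_mul_sq_norm_add (V := EuclideanSpace ℝ (Fin d))
    (b := (1/16 : ℂ)) (by norm_num) 0 0).norm
  convert h using 2 with η
  simp [Complex.norm_exp]
  rw [← Complex.ofReal_pow, Complex.ofReal_re]

lemma exp_bound (d : ℕ) (s : ℝ) (hs0 : 0 ≤ s) (hs1 : s ≤ 1) (η : EuclideanSpace ℝ (Fin d)) :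
    Real.exp (-(1/4) * (‖η‖ ^ 2 - 2 * s) ^ 2) ≤ Real.exp 7 * Real.exp (-(1/16 : ℝ) * ‖η‖ ^ 2) := by
  rw [← Real.exp_add]
  apply Real.exp_le_exp.2
  have hx : (0:ℝ) ≤ ‖η‖ := norm_nonneg _
  nlinarith [sq_nonneg (‖η‖ ^ 2 - 2), sq_nonneg (‖η‖ ^ 2 - 3), sq_nonneg ‖η‖,
    mul_nonneg (mul_nonneg hs0 hs0) (sq_nonneg ‖η‖), sq_nonneg (s * ‖η‖),
    mul_nonneg (sub_nonneg.2 hs1) (sq_nonneg ‖η‖), sq_nonneg (‖η‖^2 - 2*s)]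

lemma cont_aux (d : ℕ) (s : ℝ) :
    Continuous (fun η : EuclideanSpace ℝ (Fin d) => Real.exp (-(1/4) * (‖η‖ ^ 2 - 2 * s) ^ 2)) := by
  fun_prop

lemma Naux_integrable (d : ℕ) (s : ℝ) (hs0 : 0 ≤ s) (hs1 : s ≤ 1) :
    Integrable (fun η : EuclideanSpace ℝ (Fin d) =>
      Real.exp (-(1/4) * (‖η‖ ^ 2 - 2 * s) ^ 2)) := by
  apply Integrable.mono' (((gauss_integrable d).const_mul (Real.exp 7)))
    (cont_aux d s).aestronglyMeasurable
  filter_upwards with η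
  rw [Real.norm_eq_abs, abs_of_pos (Real.exp_pos _)]
  exact exp_bound d s hs0 hs1 η

lemma Naux_pos (d : ℕ) : 0 < Naux d 0 := by
  haveI : NeZero (volume : Measure (EuclideanSpace ℝ (Fin d))) :=
    ⟨Measure.measure_univ_ne_zero.mp (isOpen_univ.measure_pos volume univ_nonempty).ne'⟩
  exact integral_exp_pos (Naux_integrable d 0 le_rfl zero_le_one)

lemma Naux_tendsto (d : ℕ) :
    Tendsto (Naux d) (nhdsWithin 0 (Set.Ioi 0)) (nhds (Naux d 0)) := by
  apply tendsto_integral_filter_of_dominated_convergence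
    (fun η => Real.exp 7 * Real.exp (-(1/16 : ℝ) * ‖η‖ ^ 2))
  · filter_upwards with s using (cont_aux d s).aestronglyMeasurable
  · filter_upwards [Ioc_mem_nhdsGT_of_mem (Set.mem_Ico.2 ⟨le_rfl, zero_lt_one⟩)] with s hs
    filter_upwards with η
    rw [Real.norm_eq_abs, abs_of_pos (Real.exp_pos _)]
    exact exp_bound d s hs.1.le hs.2 η
  · exact (gauss_integrable d).const_mul _
  · filter_upwards with η
    have : Continuous (fun s : ℝ => Real.exp (-(1/4) * (‖η‖ ^ 2 - 2 * s) ^ 2)) := by fun_prop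
    simpa using (this.tendsto 0).mono_left nhdsWithin_le_nhds

theorem lks_sfo_L2_ratio_limit (d : ℕ) (hd : d ∈ ({1, 2, 3} : Set ℕ)) :
    Tendsto
      (fun t : ℝ =>
        (∫ ξ : EuclideanSpace ℝ (Fin d), Real.exp (-(t / 4) * (-2 + ‖ξ‖ ^ 2) ^ 2)) /
          (∫ ξ : EuclideanSpace ℝ (Fin d), Real.exp (-(t / 4) * ‖ξ‖ ^ 4)))
      (nhdsWithin 0 (Set.Ioi 0)) (nhds 1) := by
  have hsub : Tendsto Real.sqrt (nhdsWithin 0 (Set.Ioi 0)) (nhdsWithin 0 (Set.Ioi 0)) := by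
    apply tendsto_nhdsWithin_of_tendsto_nhds_of_eventually_within
    · simpa using (Real.continuous_sqrt.tendsto 0).mono_left nhdsWithin_le_nhds
    · filter_upwards [self_mem_nhdsWithin] with t (ht : 0 < t)
      exact Real.sqrt_pos.2 ht
  have key : Tendsto (fun t : ℝ => Naux d (Real.sqrt t) / Naux d 0)
      (nhdsWithin 0 (Set.Ioi 0)) (nhds 1) := by
    have := ((Naux_tendsto d).comp hsub).div tendsto_const_nhds (Naux_pos d).ne'
    rwa [div_self (Naux_pos d).ne'] at this
  apply key.congr'
  filter_upwards [self_mem_nhdsWithin] with t (ht : 0 < t)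
  set b : ℝ := Real.sqrt t with hbdef
  have hb2 : b ^ 2 = t := Real.sq_sqrt ht.le
  set a : ℝ := t ^ ((4:ℝ)⁻¹) with hadef
  have ha : 0 < a := Real.rpow_pos_of_pos ht _
  have ha2 : a ^ 2 = b := by
    rw [hadef, hbdef, ← Real.rpow_natCast (t ^ ((4:ℝ)⁻¹)) 2, ← Real.rpow_mul ht.le,
      Real.sqrt_eq_rpow]
    norm_num
  have hnum : (∫ ξ : EuclideanSpace ℝ (Fin d), Real.exp (-(t / 4) * (-2 + ‖ξ‖ ^ 2) ^ 2))
      = |(a ^ d)⁻¹| * Naux d b := by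
    have := MeasureTheory.Measure.integral_comp_smul (μ := volume)
      (fun η : EuclideanSpace ℝ (Fin d) => Real.exp (-(1/4) * (‖η‖ ^ 2 - 2 * b) ^ 2)) a
    rw [finrank_euclideanSpace_fin, smul_eq_mul] at this
    rw [Naux, ← this]
    congr 1 with ξ
    congr 1
    rw [norm_smul, Real.norm_eq_abs, abs_of_pos ha, mul_pow, ha2]
    linear_combination ((-2 + ‖ξ‖ ^ 2) ^ 2 / 4) * hb2
  have hden : (∫ ξ : EuclideanSpace ℝ (Fin d), Real.exp (-(t / 4) * ‖ξ‖ ^ 4))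
      = |(a ^ d)⁻¹| * Naux d 0 := by
    have := MeasureTheory.Measure.integral_comp_smul (μ := volume)
      (fun η : EuclideanSpace ℝ (Fin d) => Real.exp (-(1/4) * (‖η‖ ^ 2 - 2 * 0) ^ 2)) a
    rw [finrank_euclideanSpace_fin, smul_eq_mul] at this
    rw [Naux, ← this]
    congr 1 with ξ
    congr 1
    rw [norm_smul, Real.norm_eq_abs, abs_of_pos ha, mul_pow, ha2]
    linear_combination (‖ξ‖ ^ 4 / 4) * hb2
  have hc : |(a ^ d)⁻¹| ≠ 0 := by positivity
  rw [hnum, hden, mul_div_mul_left _ _ hc]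
end

section
/- Fix T > 0 and d ∈ {1,2,3}. There exist constants 0 < C_l ≤ C_u < ∞, depending only on d and T, such that C_l t^{-d/4} ≤ (2π)^{-d} ∫_{ℝ^d} e^{-(t/4)(-2+|ξ|²)²} dξ ≤ C_u t^{-d/4} for all 0 < t ≤ T. Consequently C_l' t^{(4-d)/4} ≤ ∫₀^t (2π)^{-d} ∫_{ℝ^d} e^{-(s/4)(-2+|ξ|²)²} dξ ds ≤ C_u' t^{(4-d)/4} with C_l' = 4C_l/(4-d), C_u' = 4C_u/(4-d). -/
open MeasureTheory Real Set

namespace LKSaux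

variable (d : ℕ)

local notation "E" => EuclideanSpace ℝ (Fin d)

lemma gauss_int {a : ℝ} (ha : 0 < a) :
    Integrable (fun v : E => rexp (-(a * ‖v‖ ^ 2))) := by
  have h := (GaussianFourier.integrable_cexp_neg_mul_sq_norm_add
    (V := E) (b := (a : ℂ)) (by simpa using ha) 0 0).norm
  refine h.congr ?_
  filter_upwards with v
  rw [Complex.norm_exp]
  have hz : (-(a:ℂ) * (‖v‖:ℂ) ^ 2 + 0 * ((inner ℝ (0 : E) v : ℝ) : ℂ))
      = ((-(a * ‖v‖ ^ 2) : ℝ) : ℂ) := by push_cast; ring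
  rw [hz, Complex.ofReal_re]

lemma quartic_int {a : ℝ} (ha : 0 < a) :
    Integrable (fun v : E => rexp (-(a * ‖v‖ ^ 4))) := by
  refine ((gauss_int d ha).const_mul (rexp a)).mono'
    (Continuous.aestronglyMeasurable (by fun_prop)) ?_
  filter_upwards with v
  rw [Real.norm_eq_abs, abs_of_pos (Real.exp_pos _), ← Real.exp_add]
  refine Real.exp_le_exp.2 ?_
  nlinarith [sq_nonneg (‖v‖ ^ 2 - 1), sq_nonneg (‖v‖), ha.le,
    mul_nonneg ha.le (sq_nonneg (‖v‖ ^ 2 - 1)), mul_nonneg ha.le (sq_nonneg ‖v‖)]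

lemma scaling {a t : ℝ} (ha : 0 < a) (ht : 0 < t) :
    (∫ v : E, rexp (-(t * a * ‖v‖ ^ 4)))
      = t ^ (-(d : ℝ) / 4) * ∫ v : E, rexp (-(a * ‖v‖ ^ 4)) := by
  set R : ℝ := t ^ ((1 : ℝ) / 4) with hRdef
  have hR : 0 < R := Real.rpow_pos_of_pos ht _
  have h4 : R ^ (4 : ℕ) = t := by
    rw [hRdef, ← Real.rpow_natCast (t ^ ((1 : ℝ) / 4)) 4, ← Real.rpow_mul ht.le]
    norm_num
  have key := MeasureTheory.Measure.integral_comp_smul (μ := (volume : Measure E))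
    (fun v : E => rexp (-(a * ‖v‖ ^ 4))) R
  have h1 : (∫ v : E, rexp (-(t * a * ‖v‖ ^ 4)))
      = ∫ v : E, rexp (-(a * ‖R • v‖ ^ 4)) := by
    congr 1; ext v
    rw [norm_smul, Real.norm_eq_abs, abs_of_pos hR, mul_pow, h4]
    ring_nf
  rw [h1, key, finrank_euclideanSpace_fin, smul_eq_mul]
  congr 1
  rw [abs_of_pos (by positivity), hRdef, ← Real.rpow_natCast (t ^ ((1:ℝ)/4)) d,
    ← Real.rpow_mul ht.le, ← Real.rpow_neg ht.le]
  congr 1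
  ring

lemma quartic_pos {a : ℝ} (ha : 0 < a) :
    0 < ∫ v : E, rexp (-(a * ‖v‖ ^ 4)) := by
  haveI : NeZero (volume : Measure E) := by
    refine ⟨fun h => ?_⟩
    have := isOpen_univ.measure_pos (volume : Measure E) ⟨0, trivial⟩
    rw [h] at this; simp at this
  exact integral_exp_pos (quartic_int d ha)

lemma Ft_int {t : ℝ} (ht : 0 < t) :
    Integrable (fun ξ : E => rexp (-(t / 4) * (-2 + ‖ξ‖ ^ 2) ^ 2)) := by
  refine ((quartic_int d (a := t * (1/8)) (by positivity)).const_mul (rexp t)).mono'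
    (Continuous.aestronglyMeasurable (by fun_prop)) ?_
  filter_upwards with v
  rw [Real.norm_eq_abs, abs_of_pos (Real.exp_pos _), ← Real.exp_add]
  refine Real.exp_le_exp.2 ?_
  nlinarith [mul_nonneg ht.le (sq_nonneg (‖v‖ ^ 2 - 4))]

lemma Iub {t : ℝ} (ht : 0 < t) :
    (∫ ξ : E, rexp (-(t / 4) * (-2 + ‖ξ‖ ^ 2) ^ 2))
      ≤ rexp t * (t ^ (-(d : ℝ) / 4) * ∫ v : E, rexp (-((1/8 : ℝ) * ‖v‖ ^ 4))) := by
  have h1 : (∫ ξ : E, rexp (-(t / 4) * (-2 + ‖ξ‖ ^ 2) ^ 2))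
      ≤ ∫ ξ : E, rexp t * rexp (-(t * (1/8) * ‖ξ‖ ^ 4)) := by
    refine integral_mono (Ft_int d ht)
      ((quartic_int d (a := t * (1/8)) (by positivity)).const_mul (rexp t)) (fun v => ?_)
    rw [← Real.exp_add]
    refine Real.exp_le_exp.2 ?_
    nlinarith [mul_nonneg ht.le (sq_nonneg (‖v‖ ^ 2 - 4))]
  rwa [integral_const_mul, scaling d (by norm_num : (0:ℝ) < 1/8) ht] at h1

lemma Ilb {t : ℝ} (ht : 0 < t) :
    rexp (-(2 * t)) * (t ^ (-(d : ℝ) / 4) * ∫ v : E, rexp (-((1/2 : ℝ) * ‖v‖ ^ 4)))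
      ≤ ∫ ξ : E, rexp (-(t / 4) * (-2 + ‖ξ‖ ^ 2) ^ 2) := by
  have h1 : (∫ ξ : E, rexp (-(2 * t)) * rexp (-(t * (1/2) * ‖ξ‖ ^ 4)))
      ≤ ∫ ξ : E, rexp (-(t / 4) * (-2 + ‖ξ‖ ^ 2) ^ 2) := by
    refine integral_mono
      ((quartic_int d (a := t * (1/2)) (by positivity)).const_mul _) (Ft_int d ht) (fun v => ?_)
    rw [← Real.exp_add]
    refine Real.exp_le_exp.2 ?_
    nlinarith [mul_nonneg ht.le (sq_nonneg (‖v‖ ^ 2)), mul_nonneg ht.le (sq_nonneg ‖v‖)]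
  rwa [integral_const_mul, scaling d (by norm_num : (0:ℝ) < 1/2) ht] at h1

end LKSaux
theorem lks_kernel_L2_bounds (d : ℕ) (hd : d ∈ ({1, 2, 3} : Set ℕ)) (T : ℝ) (hT : 0 < T) :
    ∃ Cl Cu : ℝ, 0 < Cl ∧ Cl ≤ Cu ∧
      (∀ t : ℝ, t ∈ Set.Ioc (0 : ℝ) T →
        Cl * t ^ (-(d : ℝ) / 4)
            ≤ ((2 * π) ^ d)⁻¹ *
                ∫ ξ : EuclideanSpace ℝ (Fin d), Real.exp (-(t / 4) * (-2 + ‖ξ‖ ^ 2) ^ 2) ∧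
          ((2 * π) ^ d)⁻¹ *
              ∫ ξ : EuclideanSpace ℝ (Fin d), Real.exp (-(t / 4) * (-2 + ‖ξ‖ ^ 2) ^ 2)
            ≤ Cu * t ^ (-(d : ℝ) / 4)) ∧
      (∀ t : ℝ, t ∈ Set.Ioc (0 : ℝ) T →
        (4 * Cl / (4 - (d : ℝ))) * t ^ ((4 - (d : ℝ)) / 4)
            ≤ ∫ s in Set.Ioc (0 : ℝ) t,
                ((2 * π) ^ d)⁻¹ *
                  ∫ ξ : EuclideanSpace ℝ (Fin d), Real.exp (-(s / 4) * (-2 + ‖ξ‖ ^ 2) ^ 2) ∧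
          ∫ s in Set.Ioc (0 : ℝ) t,
              ((2 * π) ^ d)⁻¹ *
                ∫ ξ : EuclideanSpace ℝ (Fin d), Real.exp (-(s / 4) * (-2 + ‖ξ‖ ^ 2) ^ 2)
            ≤ (4 * Cu / (4 - (d : ℝ))) * t ^ ((4 - (d : ℝ)) / 4)) := by
  have hd4 : (d : ℝ) < 4 := by
    simp only [Set.mem_insert_iff, Set.mem_singleton_iff] at hd
    rcases hd with rfl | rfl | rfl <;> norm_num
  set A8 : ℝ := ∫ v : EuclideanSpace ℝ (Fin d), rexp (-((1/8 : ℝ) * ‖v‖ ^ 4)) with hA8def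
  set A2 : ℝ := ∫ v : EuclideanSpace ℝ (Fin d), rexp (-((1/2 : ℝ) * ‖v‖ ^ 4)) with hA2def
  have hA8 : 0 < A8 := LKSaux.quartic_pos d (by norm_num)
  have hA2 : 0 < A2 := LKSaux.quartic_pos d (by norm_num)
  have hA28 : A2 ≤ A8 := by
    refine integral_mono (LKSaux.quartic_int d (by norm_num)) (LKSaux.quartic_int d (by norm_num))
      (fun v => ?_)
    refine Real.exp_le_exp.2 ?_
    nlinarith [sq_nonneg (‖v‖ ^ 2)]
  set c : ℝ := ((2 * π) ^ d)⁻¹ with hcdef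
  have hc : 0 < c := by
    rw [hcdef]
    positivity
  set Cl : ℝ := c * (rexp (-(2 * T)) * A2) with hCldef
  set Cu : ℝ := c * (rexp T * A8) with hCudef
  have hCl : 0 < Cl := by positivity
  have hClCu : Cl ≤ Cu := by
    rw [hCldef, hCudef]
    have h1 : rexp (-(2 * T)) ≤ rexp T := Real.exp_le_exp.2 (by linarith)
    have h2 : rexp (-(2 * T)) * A2 ≤ rexp T * A8 :=
      mul_le_mul h1 hA28 hA2.le (Real.exp_pos _).le
    exact mul_le_mul_of_nonneg_left h2 hc.le
  -- the key pointwise-in-t bounds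
  have key : ∀ t : ℝ, t ∈ Set.Ioc (0 : ℝ) T →
      Cl * t ^ (-(d : ℝ) / 4)
          ≤ ((2 * π) ^ d)⁻¹ *
              ∫ ξ : EuclideanSpace ℝ (Fin d), Real.exp (-(t / 4) * (-2 + ‖ξ‖ ^ 2) ^ 2) ∧
        ((2 * π) ^ d)⁻¹ *
            ∫ ξ : EuclideanSpace ℝ (Fin d), Real.exp (-(t / 4) * (-2 + ‖ξ‖ ^ 2) ^ 2)
          ≤ Cu * t ^ (-(d : ℝ) / 4) := by
    rintro t ⟨ht0, htT⟩
    have htp : (0:ℝ) < t ^ (-(d : ℝ) / 4) := Real.rpow_pos_of_pos ht0 _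
    constructor
    · have h1 := LKSaux.Ilb d (t := t) ht0
      have h2 : rexp (-(2 * T)) ≤ rexp (-(2 * t)) := Real.exp_le_exp.2 (by linarith)
      calc Cl * t ^ (-(d : ℝ) / 4)
          = c * (rexp (-(2 * T)) * (t ^ (-(d : ℝ) / 4) * A2)) := by rw [hCldef]; ring
        _ ≤ c * (rexp (-(2 * t)) * (t ^ (-(d : ℝ) / 4) * A2)) := by
            refine mul_le_mul_of_nonneg_left (mul_le_mul_of_nonneg_right h2 ?_) hc.le
            positivity
        _ ≤ c * ∫ ξ : EuclideanSpace ℝ (Fin d), Real.exp (-(t / 4) * (-2 + ‖ξ‖ ^ 2) ^ 2) :=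
            mul_le_mul_of_nonneg_left h1 hc.le
    · have h1 := LKSaux.Iub d (t := t) ht0
      have h2 : rexp t ≤ rexp T := Real.exp_le_exp.2 htT
      calc c * ∫ ξ : EuclideanSpace ℝ (Fin d), Real.exp (-(t / 4) * (-2 + ‖ξ‖ ^ 2) ^ 2)
          ≤ c * (rexp t * (t ^ (-(d : ℝ) / 4) * A8)) := mul_le_mul_of_nonneg_left h1 hc.le
        _ ≤ c * (rexp T * (t ^ (-(d : ℝ) / 4) * A8)) := by
            refine mul_le_mul_of_nonneg_left (mul_le_mul_of_nonneg_right h2 ?_) hc.le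
            positivity
        _ = Cu * t ^ (-(d : ℝ) / 4) := by rw [hCudef]; ring
  refine ⟨Cl, Cu, hCl, hClCu, key, ?_⟩
  -- the time-integrated bounds
  rintro t ⟨ht0, htT⟩
  set f : ℝ → ℝ := fun s => ((2 * π) ^ d)⁻¹ *
      ∫ ξ : EuclideanSpace ℝ (Fin d), Real.exp (-(s / 4) * (-2 + ‖ξ‖ ^ 2) ^ 2) with hfdef
  have hsub : Set.Ioc (0:ℝ) t ⊆ Set.Ioc (0:ℝ) T := Set.Ioc_subset_Ioc_right htT
  have hfnonneg : ∀ s : ℝ, 0 ≤ f s := fun s =>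
    mul_nonneg hc.le (integral_nonneg fun v => (Real.exp_pos _).le)
  have hanti : AntitoneOn f (Set.Ioc (0:ℝ) t) := by
    rintro s1 ⟨hs1, _⟩ s2 ⟨hs2, _⟩ h12
    refine mul_le_mul_of_nonneg_left ?_ hc.le
    refine integral_mono (LKSaux.Ft_int d hs2) (LKSaux.Ft_int d hs1) (fun v => ?_)
    refine Real.exp_le_exp.2 ?_
    nlinarith [sq_nonneg (-2 + ‖v‖ ^ 2)]
  have hp1 : (-1 : ℝ) < -(d : ℝ) / 4 := by
    have : (0:ℝ) ≤ d := Nat.cast_nonneg d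
    linarith
  have hrint : IntegrableOn (fun s : ℝ => s ^ (-(d : ℝ) / 4)) (Set.Ioc (0:ℝ) t) volume :=
    (intervalIntegral.intervalIntegrable_rpow' hp1 (a := 0) (b := t)).1
  have hfmeas : AEMeasurable f (volume.restrict (Set.Ioc (0:ℝ) t)) :=
    aemeasurable_restrict_of_antitoneOn measurableSet_Ioc hanti
  have hfint : IntegrableOn f (Set.Ioc (0:ℝ) t) volume := by
    refine Integrable.mono' (hrint.const_mul Cu) hfmeas.aestronglyMeasurable ?_
    rw [ae_restrict_iff' measurableSet_Ioc]
    filter_upwards with s hs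
    rw [Real.norm_eq_abs, abs_of_nonneg (hfnonneg s)]
    exact (key s (hsub hs)).2
  have hcomp : ∫ s in Set.Ioc (0:ℝ) t, s ^ (-(d : ℝ) / 4)
      = t ^ ((4 - (d : ℝ)) / 4) / ((4 - (d : ℝ)) / 4) := by
    rw [← intervalIntegral.integral_of_le ht0.le,
      integral_rpow (Or.inl hp1)]
    rw [Real.zero_rpow (by linarith : -(d : ℝ) / 4 + 1 ≠ 0)]
    rw [show -(d : ℝ) / 4 + 1 = (4 - (d : ℝ)) / 4 by ring]
    ring
  have hq : (0:ℝ) < 4 - (d : ℝ) := by linarith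
  constructor
  · have h1 : ∫ s in Set.Ioc (0:ℝ) t, Cl * s ^ (-(d : ℝ) / 4) ≤ ∫ s in Set.Ioc (0:ℝ) t, f s :=
      setIntegral_mono_on (hrint.const_mul Cl) hfint measurableSet_Ioc
        (fun s hs => (key s (hsub hs)).1)
    rw [show (∫ s in Set.Ioc (0:ℝ) t, Cl * s ^ (-(d : ℝ) / 4))
        = Cl * ∫ s in Set.Ioc (0:ℝ) t, s ^ (-(d : ℝ) / 4) from integral_const_mul _ _,
      hcomp] at h1
    calc (4 * Cl / (4 - (d : ℝ))) * t ^ ((4 - (d : ℝ)) / 4)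
        = Cl * (t ^ ((4 - (d : ℝ)) / 4) / ((4 - (d : ℝ)) / 4)) := by
          field_simp
      _ ≤ ∫ s in Set.Ioc (0:ℝ) t, f s := h1
  · have h1 : ∫ s in Set.Ioc (0:ℝ) t, f s ≤ ∫ s in Set.Ioc (0:ℝ) t, Cu * s ^ (-(d : ℝ) / 4) :=
      setIntegral_mono_on hfint (hrint.const_mul Cu) measurableSet_Ioc
        (fun s hs => (key s (hsub hs)).2)
    rw [show (∫ s in Set.Ioc (0:ℝ) t, Cu * s ^ (-(d : ℝ) / 4))
        = Cu * ∫ s in Set.Ioc (0:ℝ) t, s ^ (-(d : ℝ) / 4) from integral_const_mul _ _,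
      hcomp] at h1
    calc (∫ s in Set.Ioc (0:ℝ) t, f s)
        ≤ Cu * (t ^ ((4 - (d : ℝ)) / 4) / ((4 - (d : ℝ)) / 4)) := h1
      _ = (4 * Cu / (4 - (d : ℝ))) * t ^ ((4 - (d : ℝ)) / 4) := by
          field_simp
end

section
/- In dimension d = 3, for every t > 0, ∫_{ℝ³} e^{-(t/4)|ξ|⁴} dξ < ∫_{ℝ³} e^{-(t/4)(-2+|ξ|²)²} dξ. -/
open MeasureTheory Real Set

/-- Integrability of `r^2 * exp (-a * r^4)` on `(0, ∞)`. -/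
lemma intG {a : ℝ} (ha : 0 < a) :
    IntegrableOn (fun r : ℝ => r ^ 2 * Real.exp (-a * r ^ 4)) (Ioi 0) := by
  have h := integrableOn_rpow_mul_exp_neg_mul_rpow (p := 4) (s := 2) (b := a)
    (by norm_num) (by norm_num) ha
  refine h.congr_fun (fun x hx => ?_) measurableSet_Ioi
  rw [mem_Ioi] at hx
  beta_reduce
  rw [show ((2 : ℝ)) = ((2 : ℕ) : ℝ) by norm_num, show ((4 : ℝ)) = ((4 : ℕ) : ℝ) by norm_num,
    Real.rpow_natCast, Real.rpow_natCast]

/-- Integrability of `s^2 * exp (-a * (s^2 - 2)^2)` on `(0, ∞)`. -/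
lemma intH {a : ℝ} (ha : 0 < a) :
    IntegrableOn (fun s : ℝ => s ^ 2 * Real.exp (-a * (s ^ 2 - 2) ^ 2)) (Ioi 0) := by
  have hG : IntegrableOn (fun r : ℝ => r ^ 2 * Real.exp (-(a / 4) * r ^ 4)) (Ioi 0) :=
    intG (by linarith)
  refine Integrable.mono' (hG.const_mul (Real.exp (4 * a))) ?_ ?_
  · apply Measurable.aestronglyMeasurable
    fun_prop
  · filter_upwards [] with s
    rw [norm_mul, norm_pow, Real.norm_eq_abs, Real.norm_eq_abs,
      Real.abs_exp, sq_abs]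
    rw [mul_comm (Real.exp (4 * a)) _, mul_assoc, ← Real.exp_add]
    apply mul_le_mul_of_nonneg_left _ (sq_nonneg s)
    apply Real.exp_le_exp.2
    nlinarith [sq_nonneg (3 * s ^ 2 - 8), sq_nonneg s, sq_nonneg (s ^ 2 - 2)]

/-- The key one-dimensional strict inequality. -/
lemma key1d {a : ℝ} (ha : 0 < a) :
    (∫ r in Ioi (0 : ℝ), r ^ 2 * Real.exp (-a * r ^ 4))
      < ∫ r in Ioi (0 : ℝ), r ^ 2 * Real.exp (-a * (-2 + r ^ 2) ^ 2) := by
  have hs2 : (0 : ℝ) < Real.sqrt 2 := Real.sqrt_pos.2 (by norm_num)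
  -- rewrite (-2 + r^2)^2 as (r^2 - 2)^2
  have hflip : ∀ r : ℝ, (-2 + r ^ 2 : ℝ) ^ 2 = (r ^ 2 - 2) ^ 2 := fun r => by ring
  simp only [hflip]
  set G : ℝ → ℝ := fun r => r ^ 2 * Real.exp (-a * r ^ 4) with hGdef
  set H : ℝ → ℝ := fun s => s ^ 2 * Real.exp (-a * (s ^ 2 - 2) ^ 2) with hHdef
  -- facts about points of Ioi (sqrt 2)
  have hsq : ∀ s ∈ Ioi (Real.sqrt 2), 0 < s ^ 2 - 2 := by
    intro s hs
    rw [mem_Ioi] at hs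
    have h2 : Real.sqrt 2 ^ 2 = 2 := Real.sq_sqrt (by norm_num)
    nlinarith [hs2]
  -- change of variables: f s = sqrt (s^2 - 2) maps Ioi (sqrt 2) onto Ioi 0
  set f : ℝ → ℝ := fun s => Real.sqrt (s ^ 2 - 2) with hfdef
  set f' : ℝ → ℝ := fun s => s / Real.sqrt (s ^ 2 - 2) with hf'def
  have himg : f '' Ioi (Real.sqrt 2) = Ioi 0 := by
    ext y
    constructor
    · rintro ⟨s, hs, rfl⟩
      exact Real.sqrt_pos.2 (hsq s hs)
    · intro hy
      rw [mem_Ioi] at hy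
      refine ⟨Real.sqrt (y ^ 2 + 2), ?_, ?_⟩
      · rw [mem_Ioi]
        apply Real.sqrt_lt_sqrt (by norm_num)
        nlinarith
      · rw [hfdef]
        simp only
        rw [Real.sq_sqrt (by positivity)]
        rw [show y ^ 2 + 2 - 2 = y ^ 2 by ring, Real.sqrt_sq hy.le]
  have hderiv : ∀ s ∈ Ioi (Real.sqrt 2),
      HasDerivWithinAt f (f' s) (Ioi (Real.sqrt 2)) s := by
    intro s hs
    have h1 : HasDerivAt (fun x : ℝ => x ^ 2 - 2) (2 * s) s := by
      simpa using (hasDerivAt_pow 2 s).sub_const 2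
    have h2 : HasDerivAt Real.sqrt (1 / (2 * Real.sqrt (s ^ 2 - 2))) (s ^ 2 - 2) :=
      Real.hasDerivAt_sqrt (ne_of_gt (hsq s hs))
    have h3 := h2.comp s h1
    have hne : Real.sqrt (s ^ 2 - 2) ≠ 0 := ne_of_gt (Real.sqrt_pos.2 (hsq s hs))
    have : (1 / (2 * Real.sqrt (s ^ 2 - 2))) * (2 * s) = f' s := by
      rw [hf'def]; field_simp
    rw [← this]
    exact h3.hasDerivWithinAt
  have hinj : InjOn f (Ioi (Real.sqrt 2)) := by
    intro s1 h1 s2 h2 heq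
    have e1 : s1 ^ 2 - 2 = s2 ^ 2 - 2 := by
      have := congrArg (fun x => x ^ 2) heq
      simpa [hfdef, Real.sq_sqrt (hsq s1 h1).le, Real.sq_sqrt (hsq s2 h2).le] using this
    rw [mem_Ioi] at h1 h2
    nlinarith [hs2]
  -- the change of variables formula
  have hcov : (∫ r in Ioi (0 : ℝ), G r)
      = ∫ s in Ioi (Real.sqrt 2), |f' s| • G (f s) := by
    rw [← himg]
    exact integral_image_eq_integral_abs_deriv_smul measurableSet_Ioi hderiv hinj G
  -- simplify the transformed integrand
  have hcov2 : ∀ s ∈ Ioi (Real.sqrt 2),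
      |f' s| • G (f s) = s * Real.sqrt (s ^ 2 - 2) * Real.exp (-a * (s ^ 2 - 2) ^ 2) := by
    intro s hs
    have hpos := hsq s hs
    have hspos : 0 < s := lt_trans hs2 (mem_Ioi.1 hs)
    have hrt : 0 < Real.sqrt (s ^ 2 - 2) := Real.sqrt_pos.2 hpos
    have h4 : f s ^ 4 = (s ^ 2 - 2) ^ 2 := by
      rw [hfdef]
      simp only
      rw [show (4 : ℕ) = 2 * 2 by norm_num, pow_mul, Real.sq_sqrt hpos.le]
    have h2 : f s ^ 2 = s ^ 2 - 2 := by
      rw [hfdef]; simp only; exact Real.sq_sqrt hpos.le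
    rw [hGdef]
    simp only [smul_eq_mul]
    rw [h4, h2, hf'def]
    simp only
    rw [abs_of_pos (div_pos hspos hrt)]
    nth_rewrite 2 [show s ^ 2 - 2 = Real.sqrt (s ^ 2 - 2) * Real.sqrt (s ^ 2 - 2) from
      (Real.mul_self_sqrt hpos.le).symm]
    rw [div_mul_eq_mul_div, div_eq_iff hrt.ne']
    ring
  -- integrability facts
  have hHint : IntegrableOn H (Ioi 0) := intH ha
  have hHint' : IntegrableOn H (Ioi (Real.sqrt 2)) :=
    hHint.mono_set (Ioi_subset_Ioi hs2.le)
  have hKint : IntegrableOn (fun s => |f' s| • G (f s)) (Ioi (Real.sqrt 2)) := by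
    rw [← integrableOn_image_iff_integrableOn_abs_deriv_smul measurableSet_Ioi hderiv hinj G,
      himg]
    exact intG ha
  -- step 1: transformed integrand ≤ H on Ioi (sqrt 2)
  have hle : (∫ s in Ioi (Real.sqrt 2), |f' s| • G (f s))
      ≤ ∫ s in Ioi (Real.sqrt 2), H s := by
    refine setIntegral_mono_on hKint hHint' measurableSet_Ioi ?_
    intro s hs
    rw [hcov2 s hs, hHdef]
    simp only
    have hspos : 0 < s := lt_trans hs2 (mem_Ioi.1 hs)
    have hsl : Real.sqrt (s ^ 2 - 2) ≤ s := by
      calc Real.sqrt (s ^ 2 - 2) ≤ Real.sqrt (s ^ 2) := Real.sqrt_le_sqrt (by linarith)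
        _ = s := by rw [Real.sqrt_sq hspos.le]
    have hexp : 0 < Real.exp (-a * (s ^ 2 - 2) ^ 2) := Real.exp_pos _
    have hmul := mul_le_mul_of_nonneg_right (mul_le_mul_of_nonneg_left hsl hspos.le) hexp.le
    nlinarith [hmul]
  -- step 2: the piece on Ioc 0 (sqrt 2) is positive
  have hsplit : (∫ s in Ioi (0 : ℝ), H s)
      = (∫ s in Ioc (0 : ℝ) (Real.sqrt 2), H s) + ∫ s in Ioi (Real.sqrt 2), H s := by
    rw [← setIntegral_union (Ioc_disjoint_Ioi le_rfl) measurableSet_Ioi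
      (hHint.mono_set Ioc_subset_Ioi_self) hHint',
      Ioc_union_Ioi_eq_Ioi hs2.le]
  have hposI : 0 < ∫ s in Ioc (0 : ℝ) (Real.sqrt 2), H s := by
    have hni : IntegrableOn H (Ioc (0 : ℝ) (Real.sqrt 2)) :=
      hHint.mono_set Ioc_subset_Ioi_self
    rw [setIntegral_pos_iff_support_of_nonneg_ae ?nonneg hni]
    case nonneg =>
      filter_upwards [] with s
      rw [hHdef]
      positivity
    have hsub : Ioc (0 : ℝ) (Real.sqrt 2) ⊆ Function.support H := by
      intro s hs
      rw [mem_Ioc] at hs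
      have hs0 : s ≠ 0 := ne_of_gt hs.1
      have : H s ≠ 0 := by
        rw [hHdef]
        have := Real.exp_pos (-a * (s ^ 2 - 2) ^ 2)
        positivity
      exact this
    calc (0 : ENNReal) < volume (Ioc (0 : ℝ) (Real.sqrt 2)) := by
          rw [Real.volume_Ioc]
          simp [hs2]
      _ ≤ volume (Function.support H ∩ Ioc (0 : ℝ) (Real.sqrt 2)) := by
          rw [inter_eq_right.2 hsub]
  calc (∫ r in Ioi (0 : ℝ), G r) = ∫ s in Ioi (Real.sqrt 2), |f' s| • G (f s) := hcov
    _ ≤ ∫ s in Ioi (Real.sqrt 2), H s := hle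
    _ < (∫ s in Ioc (0 : ℝ) (Real.sqrt 2), H s) + ∫ s in Ioi (Real.sqrt 2), H s := by
        linarith
    _ = ∫ s in Ioi (0 : ℝ), H s := hsplit.symm

theorem sfo_lt_lks_L2_three_dim (t : ℝ) (ht : 0 < t) :
    (∫ ξ : EuclideanSpace ℝ (Fin 3), Real.exp (-(t / 4) * ‖ξ‖ ^ 4))
      < ∫ ξ : EuclideanSpace ℝ (Fin 3), Real.exp (-(t / 4) * (-2 + ‖ξ‖ ^ 2) ^ 2) := by
  have ha : 0 < t / 4 := by linarith
  have h1 := integral_fun_norm_addHaar (volume : Measure (EuclideanSpace ℝ (Fin 3)))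
    (fun r : ℝ => Real.exp (-(t / 4) * r ^ 4))
  have h2 := integral_fun_norm_addHaar (volume : Measure (EuclideanSpace ℝ (Fin 3)))
    (fun r : ℝ => Real.exp (-(t / 4) * (-2 + r ^ 2) ^ 2))
  rw [finrank_euclideanSpace_fin] at h1 h2
  rw [h1, h2]
  have hb0 : (0 : ENNReal) < volume (Metric.ball (0 : EuclideanSpace ℝ (Fin 3)) 1) :=
    Metric.measure_ball_pos volume 0 one_pos
  have hbt : volume (Metric.ball (0 : EuclideanSpace ℝ (Fin 3)) 1) < ⊤ :=
    measure_ball_lt_top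
  have hc : 0 < (volume (Metric.ball (0 : EuclideanSpace ℝ (Fin 3)) 1)).toReal :=
    ENNReal.toReal_pos hb0.ne' hbt.ne
  have hkey := key1d ha
  simp only [nsmul_eq_mul, smul_eq_mul, Nat.cast_ofNat]
  have h3 : (∫ y in Ioi (0 : ℝ), y ^ (3 - 1) * Real.exp (-(t / 4) * y ^ 4))
      < ∫ y in Ioi (0 : ℝ), y ^ (3 - 1) * Real.exp (-(t / 4) * (-2 + y ^ 2) ^ 2) := hkey
  have h4 := mul_lt_mul_of_pos_left h3 hc
  exact mul_lt_mul_of_pos_left h4 (by norm_num : (0 : ℝ) < 3)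
end
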